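/- For the complete multipartite graph K_{r_1,...,r_t} with t > 2 parts (each r_i ≥ 1), the edge metric dimension equals (Σ_{i=1}^t r_i) - 1. -/

import Mathlib

open SimpleGraph

variable {V W : Type*}

/-- Distance (in `ℕ∞`) from a vertex to an edge: the minimum of the distances
to the two endpoints. -/
noncomputable def edgeDist (G : SimpleGraph V) (v : V) (e : Sym2 V) : ℕ∞ :=
  Sym2.lift ⟨fun a b => min (G.edist v a) (G.edist v b),
    fun a b => min_comm _ _⟩ e

/-- A set of vertices is an edge metric generator if every pair of distinct
edges is distinguished by some vertex of the set. -/
def IsEdgeMetricGenerator (G : SimpleGraph V) (S : Set V) : Prop :=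
  ∀ e₁ ∈ G.edgeSet, ∀ e₂ ∈ G.edgeSet, e₁ ≠ e₂ →
    ∃ w ∈ S, edgeDist G w e₁ ≠ edgeDist G w e₂

/-- The edge metric dimension: minimum cardinality of an edge metric generator. -/
noncomputable def edim (G : SimpleGraph V) : ℕ :=
  sInf {n | ∃ S : Set V, S.ncard = n ∧ IsEdgeMetricGenerator G S}


/-- The join of two graphs: disjoint union plus all edges across. -/
def joinGraph (G : SimpleGraph V) (H : SimpleGraph W) : SimpleGraph (V ⊕ W) where
  Adj x y := match x, y with
    | .inl a, .inl b => G.Adj a b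
    | .inr a, .inr b => H.Adj a b
    | .inl _, .inr _ => True
    | .inr _, .inl _ => True
  symm := by constructor; rintro (a | a) (b | b) h <;> simp_all [SimpleGraph.adj_comm]
  loopless := by
    constructor; rintro (a | a) h
    · exact G.loopless.irrefl a h
    · exact H.loopless.irrefl a h

/-- A total dominating set: every vertex has a neighbor in the set. -/
def IsTotalDomSet (G : SimpleGraph V) (D : Set V) : Prop :=
  ∀ v : V, ∃ d ∈ D, G.Adj v d

/-- The total domination number. -/
noncomputable def totalDomNum (G : SimpleGraph V) : ℕ :=
  sInf {n | ∃ D : Set V, D.ncard = n ∧ IsTotalDomSet G D}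

/-- The class 𝒢: for every vertex `u` there is a neighbor `v`
such that `{u, v}` is a minimum total dominating set. -/
def InClassG (G : SimpleGraph V) : Prop :=
  ∀ u : V, ∃ v : V, G.Adj u v ∧ IsTotalDomSet G {u, v} ∧
    ({u, v} : Set V).ncard = totalDomNum G

/-- Lexicographic product `G[H]`. -/
def lexProd (G : SimpleGraph V) (H : SimpleGraph W) : SimpleGraph (V × W) where
  Adj x y := G.Adj x.1 y.1 ∨ (x.1 = y.1 ∧ H.Adj x.2 y.2)
  symm := by constructor; rintro ⟨g, h⟩ ⟨g', h'⟩ (hadj | ⟨rfl, hadj⟩)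
             · exact Or.inl hadj.symm
             · exact Or.inr ⟨rfl, hadj.symm⟩
  loopless := by constructor; rintro ⟨g, h⟩ (hadj | ⟨-, hadj⟩)
                 · exact G.loopless.irrefl g hadj
                 · exact H.loopless.irrefl h hadj

/-- Corona product `G ⊙ H`: vertex `(g, none)` is the vertex `g` of `G`, and
`(g, some h)` is the vertex `h` of the copy of `H` attached to `g`. -/
def corona (G : SimpleGraph V) (H : SimpleGraph W) : SimpleGraph (V × Option W) where
  Adj x y := match x, y with
    | (g, none), (g', none) => G.Adj g g'
    | (g, none), (g', some _) => g = g'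
    | (g, some _), (g', none) => g = g'
    | (g, some h), (g', some h') => g = g' ∧ H.Adj h h'
  symm := by constructor; rintro ⟨g, (_ | h)⟩ ⟨g', (_ | h')⟩ hadj <;>
             simp_all [SimpleGraph.adj_comm, eq_comm]
  loopless := by constructor; rintro ⟨g, (_ | h)⟩ hadj <;> simp_all

/-- The closed neighborhood of a vertex. -/
def closedNbhd (G : SimpleGraph V) (u : V) : Set V :=
  insert u (G.neighborSet u)

/-- `u` and `v` are false twins: equal open neighborhoods. -/
def FalseTwin (G : SimpleGraph V) (u v : V) : Prop :=
  G.neighborSet u = G.neighborSet v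

/-- `u` and `v` are true twins: equal closed neighborhoods. -/
def TrueTwin (G : SimpleGraph V) (u v : V) : Prop :=
  closedNbhd G u = closedNbhd G v

/-- The union of the closed neighborhoods of the two endpoints of an edge. -/
def edgeNbhd (G : SimpleGraph V) : Sym2 V → Set V :=
  Sym2.lift ⟨fun a b => closedNbhd G a ∪ closedNbhd G b, fun _ _ => Set.union_comm _ _⟩

/-- Two edges are twin edges: `N[u] ∪ N[v] = N[x] ∪ N[y]`. -/
def TwinEdges (G : SimpleGraph V) (e f : Sym2 V) : Prop :=
  edgeNbhd G e = edgeNbhd G f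

/-- The set of edges lying in nontrivial edge-twin classes. -/
def nontrivTwinEdges (G : SimpleGraph V) : Set (Sym2 V) :=
  {e ∈ G.edgeSet | ∃ f ∈ G.edgeSet, f ≠ e ∧ TwinEdges G e f}

/-- `q(G)`: the number of edges lying in nontrivial edge-twin classes. -/
noncomputable def qval (G : SimpleGraph V) : ℕ := (nontrivTwinEdges G).ncard

/-- `q'(G) = q(G) - m`, where `m` is the number of nontrivial edge-twin classes. -/
noncomputable def q'val (G : SimpleGraph V) : ℕ :=
  qval G - (edgeNbhd G '' nontrivTwinEdges G).ncard

/-- The set of vertices lying in nontrivial false-twin classes. -/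
def nontrivFalseTwins (G : SimpleGraph V) : Set V :=
  {v | ∃ u, u ≠ v ∧ FalseTwin G u v}

/-- The set of vertices lying in nontrivial true-twin classes. -/
def nontrivTrueTwins (G : SimpleGraph V) : Set V :=
  {v | ∃ u, u ≠ v ∧ TrueTwin G u v}

/-- `f'(G) = f(G) - k`: vertices in nontrivial false-twin classes minus the
number of such classes. -/
noncomputable def f'val (G : SimpleGraph V) : ℕ :=
  (nontrivFalseTwins G).ncard - (G.neighborSet '' nontrivFalseTwins G).ncard

/-- `t'(G) = t(G) - ℓ`: vertices in nontrivial true-twin classes minus the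
number of such classes. -/
noncomputable def t'val (G : SimpleGraph V) : ℕ :=
  (nontrivTrueTwins G).ncard - (closedNbhd G '' nontrivTrueTwins G).ncard

/-- A set of representatives for the twin deletion operation: it contains
exactly one vertex from each (false- or true-) twin equivalence class. -/
def IsTwinDeletionSet (G : SimpleGraph V) (R : Set V) : Prop :=
  ∀ v : V, ∃! r : V, r ∈ R ∧ (FalseTwin G v r ∨ TrueTwin G v r)


/-- The complete multipartite graph with parts of sizes `r 0, …, r (t-1)`. -/
def completeMultipartiteGraph' {t : ℕ} (r : Fin t → ℕ) :
    SimpleGraph (Σ i : Fin t, Fin (r i)) where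
  Adj x y := x.1 ≠ y.1
  symm := ⟨fun _ _ h => h.symm⟩
  loopless := ⟨fun _ h => h rfl⟩


/-!
A vertex is at distance `0` exactly from the edges containing it. Two distinct edges differ
in at least two vertices, so all vertices but one already form an edge metric generator of any
graph. Conversely, in the complete multipartite graph with at least three nonempty parts, two
vertices `u`, `v` have a common neighbour `z` in a third part, and every vertex other than `u`
and `v` is at the same distance (`0` for `z`, `1` otherwise) from the edges `uz` and `vz`; so a
generator misses at most one vertex.
-/

section EdgeMetric

variable {G : SimpleGraph V}

lemma edgeDist_mk (G : SimpleGraph V) (w a b : V) :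
    edgeDist G w s(a, b) = min (G.edist w a) (G.edist w b) := rfl

lemma edgeDist_eq_zero_iff {w : V} {e : Sym2 V} : edgeDist G w e = 0 ↔ w ∈ e := by
  induction e using Sym2.ind with
  | _ a b => simp [edgeDist_mk]

lemma edgeDist_eq_one_of_adj {w a b : V} (hwa : G.Adj w a) (hw : w ∉ s(a, b)) :
    edgeDist G w s(a, b) = 1 := by
  have hwb : w ≠ b := fun h => hw (h ▸ Sym2.mem_mk_right a b)
  rw [edgeDist_mk, edist_eq_one_iff_adj.mpr hwa]
  exact min_eq_left (Order.one_le_iff_pos.mpr (edist_pos_of_ne hwb))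

lemma edgeDist_ne_of_mem_of_notMem {w : V} {e₁ e₂ : Sym2 V} (h₁ : w ∈ e₁) (h₂ : w ∉ e₂) :
    edgeDist G w e₁ ≠ edgeDist G w e₂ := by
  rw [edgeDist_eq_zero_iff.mpr h₁]
  exact fun h => h₂ (edgeDist_eq_zero_iff.mp h.symm)

lemma Sym2.exists_mem_notMem_of_ne {e₁ e₂ : Sym2 V} (he₁ : ¬e₁.IsDiag) (hne : e₁ ≠ e₂) :
    ∃ a ∈ e₁, a ∉ e₂ := by
  induction e₁ using Sym2.ind with
  | _ a b =>
    by_contra! h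
    exact hne ((Sym2.mem_and_mem_iff (by simpa using he₁)).mp
      ⟨h a (Sym2.mem_mk_left a b), h b (Sym2.mem_mk_right a b)⟩).symm

lemma isEdgeMetricGenerator_compl_singleton (G : SimpleGraph V) (v : V) :
    IsEdgeMetricGenerator G {v}ᶜ := by
  intro e₁ he₁ e₂ he₂ hne
  obtain ⟨a, ha₁, ha₂⟩ := Sym2.exists_mem_notMem_of_ne (G.not_isDiag_of_mem_edgeSet he₁) hne
  obtain ⟨b, hb₂, hb₁⟩ :=
    Sym2.exists_mem_notMem_of_ne (G.not_isDiag_of_mem_edgeSet he₂) (Ne.symm hne)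
  by_cases hav : a = v
  · refine ⟨b, ?_, (edgeDist_ne_of_mem_of_notMem hb₂ hb₁).symm⟩
    rintro rfl
    exact ha₂ (hav ▸ hb₂)
  · exact ⟨a, hav, edgeDist_ne_of_mem_of_notMem ha₁ ha₂⟩

lemma IsEdgeMetricGenerator.mem_or_mem {S : Set V} (hS : IsEdgeMetricGenerator G S)
    {u v z : V} (huv : u ≠ v) (hu : G.Adj u z) (hv : G.Adj v z)
    (hsame : ∀ w, w ≠ u → w ≠ v → edgeDist G w s(u, z) = edgeDist G w s(v, z)) :
    u ∈ S ∨ v ∈ S := by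
  by_contra! hnot
  obtain ⟨w, hwS, hw⟩ := hS _ hu _ hv (Sym2.congr_left.not.mpr huv)
  exact hw (hsame w (fun h => hnot.1 (h ▸ hwS)) (fun h => hnot.2 (h ▸ hwS)))

lemma edim_eq_ncard {S : Set V} (hS : IsEdgeMetricGenerator G S)
    (hmin : ∀ T, IsEdgeMetricGenerator G T → S.ncard ≤ T.ncard) : edim G = S.ncard :=
  le_antisymm (Nat.sInf_le ⟨S, rfl, hS⟩)
    (le_csInf ⟨_, S, rfl, hS⟩ (by rintro _ ⟨T, rfl, hT⟩; exact hmin T hT))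

lemma Set.card_sub_one_le_ncard_of_mem_or_mem [Finite V] {S : Set V}
    (h : ∀ u v : V, u ≠ v → u ∈ S ∨ v ∈ S) : Nat.card V - 1 ≤ S.ncard := by
  have hcompl : Sᶜ.ncard ≤ 1 := (Set.ncard_le_one_iff).mpr fun {u v} hu hv => by
    by_contra huv
    exact (h u v huv).elim hu hv
  have := Set.ncard_add_ncard_compl S
  omega

theorem edim_eq_card_sub_one [Finite V] [Nonempty V]
    (h : ∀ S, IsEdgeMetricGenerator G S → ∀ u v : V, u ≠ v → u ∈ S ∨ v ∈ S) :
    edim G = Nat.card V - 1 := by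
  let v : V := Classical.arbitrary V
  have hcard : ({v}ᶜ : Set V).ncard = Nat.card V - 1 := by
    rw [Set.ncard_compl, Set.ncard_singleton]
  rw [← hcard]
  exact edim_eq_ncard (isEdgeMetricGenerator_compl_singleton G v)
    fun T hT => hcard ▸ Set.card_sub_one_le_ncard_of_mem_or_mem (h T hT)

end EdgeMetric

section CompleteMultipartite

variable {t : ℕ} {r : Fin t → ℕ}

lemma edgeDist_completeMultipartiteGraph' {w a b : Σ i : Fin t, Fin (r i)} (hab : a.1 ≠ b.1) :
    edgeDist (completeMultipartiteGraph' r) w s(a, b) = if w ∈ s(a, b) then 0 else 1 := by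
  split_ifs with hw
  · exact edgeDist_eq_zero_iff.mpr hw
  by_cases hwa : w.1 = a.1
  · rw [Sym2.eq_swap] at hw ⊢
    exact edgeDist_eq_one_of_adj (show w.1 ≠ b.1 from hwa ▸ hab) hw
  · exact edgeDist_eq_one_of_adj hwa hw

lemma IsEdgeMetricGenerator.mem_or_mem_of_completeMultipartiteGraph' (ht : 2 < t)
    (hr : ∀ i, 1 ≤ r i) {S : Set (Σ i : Fin t, Fin (r i))}
    (hS : IsEdgeMetricGenerator (completeMultipartiteGraph' r) S) {u v : Σ i : Fin t, Fin (r i)}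
    (huv : u ≠ v) : u ∈ S ∨ v ∈ S := by
  obtain ⟨k, -, hk⟩ := Finset.exists_mem_notMem_of_card_lt_card
    (s := {u.1, v.1}) (t := Finset.univ)
    ((Finset.card_le_two).trans_lt (by simpa using ht))
  simp only [Finset.mem_insert, Finset.mem_singleton, not_or] at hk
  refine hS.mem_or_mem (z := ⟨k, 0, hr k⟩) huv (Ne.symm hk.1) (Ne.symm hk.2) fun w hwu hwv => ?_
  rw [edgeDist_completeMultipartiteGraph' (Ne.symm hk.1),
    edgeDist_completeMultipartiteGraph' (Ne.symm hk.2)]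
  simp [hwu, hwv]

end CompleteMultipartite

theorem edim_completeMultipartite {t : ℕ} (ht : 2 < t) (r : Fin t → ℕ)
    (hr : ∀ i, 1 ≤ r i) :
    edim (completeMultipartiteGraph' r) = (∑ i, r i) - 1 := by
  have : Nonempty (Σ i : Fin t, Fin (r i)) := ⟨⟨⟨0, by omega⟩, 0, hr _⟩⟩
  rw [edim_eq_card_sub_one fun S hS _ _ => hS.mem_or_mem_of_completeMultipartiteGraph' ht hr]
  simp [Nat.card_eq_fintype_card, Fintype.card_sigma]
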